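/- Let L be a circulant n×n real matrix with L·1 = 0, zero a simple eigenvalue, and all other eigenvalues with positive real part. Then the node certainty index is the same for all nodes: for every k, lim_{t→∞}((∫₀^t exp(-Ls)exp(-L^T s) ds)_{kk} − t/n) = (1/n)·∑_{p=2}^n 1/(2 Re(λ_p)), independent of k. -/

import Mathlib

/-!
Circulant matrices commute, so `exp(-sL) exp(-sLᵀ)` commutes with every circulant matrix, in
particular with the cyclic shifts; hence its diagonal is constant and each diagonal entry is
`1/n` of its trace.
Conjugating by the unitary matrix of the orthonormal eigenvectors, that trace is
`∑ₚ |exp(-s λₚ)|² = ∑ₚ exp(-2 Re λₚ s)`. After integration, the `p = 0` term contributes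
exactly `t`, and each other term converges to `1 / (2 Re λₚ)`.
-/

open Matrix Finset Filter NormedSpace

namespace Matrix

section Circulant

variable {n R : Type*} [Fintype n] [DecidableEq n] [AddCommGroup n] [Semiring R]

theorem circulant_single_one_mul_apply (g : n) (X : Matrix n n R) (i j : n) :
    (circulant (Pi.single g (1 : R)) * X) i j = X (i - g) j := by
  have hsub (x : n) : i - x = g ↔ x = i - g := by
    rw [sub_eq_iff_eq_add', eq_sub_iff_add_eq, eq_comm]
  simp [mul_apply, circulant_apply, Pi.single_apply, hsub]

theorem mul_circulant_single_one_apply (g : n) (X : Matrix n n R) (i j : n) :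
    (X * circulant (Pi.single g (1 : R))) i j = X i (j + g) := by
  simp [mul_apply, circulant_apply, Pi.single_apply, sub_eq_iff_eq_add']

theorem apply_self_eq_of_forall_commute_circulant {X : Matrix n n R}
    (hX : ∀ w, Commute (circulant w) X) (i j : n) : X i i = X j j := by
  have h := congrFun₂ (hX (Pi.single (j - i) (1 : R))).eq j i
  rwa [circulant_single_one_mul_apply, mul_circulant_single_one_apply, sub_sub_cancel,
    add_sub_cancel] at h

theorem trace_eq_card_nsmul_of_forall_commute_circulant {X : Matrix n n R}
    (hX : ∀ w, Commute (circulant w) X) (i : n) : trace X = Fintype.card n • X i i := by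
  rw [trace, ← card_univ, ← sum_const]
  exact sum_congr rfl fun j _ => apply_self_eq_of_forall_commute_circulant hX j i

end Circulant

variable {n : Type*} [Fintype n] [DecidableEq n]

theorem transpose_of_mem_unitaryGroup {u : n → n → ℂ}
    (hu : ∀ p q, ∑ i, starRingEnd ℂ (u p i) * u q i = if p = q then 1 else 0) :
    (of u)ᵀ ∈ unitaryGroup n ℂ := by
  refine mem_unitaryGroup_iff'.mpr (ext fun p q => ?_)
  simpa [mul_apply, one_apply] using hu p q

theorem eq_mul_diagonal_mul_conjTranspose {A U : Matrix n n ℂ} (hU : U ∈ unitaryGroup n ℂ)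
    {d : n → ℂ} (hA : ∀ p, A *ᵥ (fun i => U i p) = d p • fun i => U i p) :
    A = U * diagonal d * Uᴴ := by
  have hAU : A * U = U * diagonal d := by
    ext i p
    rw [mul_diagonal]
    simpa [mulVec, dotProduct, mul_apply, mul_comm] using congrFun (hA p) i
  rw [← hAU, Matrix.mul_assoc, ← star_eq_conjTranspose, Unitary.mul_star_self_of_mem hU,
    Matrix.mul_one]

theorem exp_unitary_conj {U : Matrix n n ℂ} (hU : U ∈ unitaryGroup n ℂ) (A : Matrix n n ℂ) :
    exp (U * A * Uᴴ) = U * exp A * Uᴴ := by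
  simpa [star_eq_conjTranspose] using exp_units_conj (Unitary.toUnits ⟨U, hU⟩) A

theorem trace_exp_mul_exp_conjTranspose {U : Matrix n n ℂ} (hU : U ∈ unitaryGroup n ℂ)
    (d : n → ℂ) :
    trace (exp (U * diagonal d * Uᴴ) * exp (U * diagonal d * Uᴴ)ᴴ)
      = ∑ p, (Real.exp (2 * (d p).re) : ℂ) := by
  have hUU : Uᴴ * U = 1 := by
    rw [← star_eq_conjTranspose]; exact Unitary.star_mul_self_of_mem hU
  set D := exp (diagonal d)
  calc trace (exp (U * diagonal d * Uᴴ) * exp (U * diagonal d * Uᴴ)ᴴ)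
      = trace (U * (D * Dᴴ) * Uᴴ) := by
        rw [exp_conjTranspose, exp_unitary_conj hU]
        simp only [conjTranspose_mul, conjTranspose_conjTranspose, Matrix.mul_assoc]
        rw [← Matrix.mul_assoc Uᴴ U, hUU, Matrix.one_mul]
    _ = trace (D * Dᴴ) := by rw [trace_mul_cycle, hUU, Matrix.one_mul]
    _ = ∑ p, (Real.exp (2 * (d p).re) : ℂ) := by
        simp only [D, exp_diagonal, diagonal_conjTranspose, diagonal_mul_diagonal, trace_diagonal]
        refine sum_congr rfl fun p _ => ?_
        rw [Pi.star_apply, Pi.exp_def, ← Complex.exp_eq_exp_ℂ, Complex.star_def, ← Complex.exp_conj,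
          ← Complex.exp_add, Complex.add_conj, Complex.ofReal_exp]

theorem exp_map_ofReal (A : Matrix n n ℝ) :
    (exp A).map Complex.ofReal = exp (A.map Complex.ofReal) := by
  -- `exp` does not depend on the norm, so any submultiplicative one lets us use `map_exp`.
  let : NormedRing (Matrix n n ℝ) := Matrix.linftyOpNormedRing
  let : NormedRing (Matrix n n ℂ) := Matrix.linftyOpNormedRing
  let : NormedAlgebra ℝ (Matrix n n ℝ) := Matrix.linftyOpNormedAlgebra
  let : NormedAlgebra ℚ (Matrix n n ℝ) := Matrix.linftyOpNormedAlgebra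
  exact map_exp (Complex.ofRealHom.mapMatrix (m := n))
    (continuous_id.matrix_map Complex.continuous_ofReal) A

theorem trace_exp_neg_smul_mul_exp_neg_smul_transpose (L : Matrix n n ℝ) {lam : n → ℂ}
    {u : n → n → ℂ}
    (horth : ∀ p q, ∑ i, starRingEnd ℂ (u p i) * u q i = if p = q then 1 else 0)
    (heig : ∀ p, L.map Complex.ofReal *ᵥ u p = lam p • u p) (s : ℝ) :
    trace (exp (-(s • L)) * exp (-(s • Lᵀ))) = ∑ p, Real.exp (-(2 * (lam p).re) * s) := by
  have hU := transpose_of_mem_unitaryGroup horth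
  have hL := eq_mul_diagonal_mul_conjTranspose hU heig
  have hA : (-(s • L)).map Complex.ofReal = (of u)ᵀ * diagonal (-(s • lam)) * (of u)ᵀᴴ := by
    have hmap : (-(s • L)).map Complex.ofReal = -(s • L.map Complex.ofReal) := by ext; simp
    have hdiag : diagonal (-(s • lam)) = -(s • diagonal lam) := by
      rw [← diagonal_smul]; exact (diagonal_neg _).symm
    rw [hmap, hL, hdiag]
    simp only [Matrix.mul_neg, Matrix.neg_mul, Matrix.mul_smul, Matrix.smul_mul]
  have hAt : (-(s • Lᵀ)).map Complex.ofReal = ((-(s • L)).map Complex.ofReal)ᴴ := by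
    ext; simp
  have htrace (M : Matrix n n ℝ) : ((trace M : ℝ) : ℂ) = trace (M.map Complex.ofReal) := by
    simp [trace]
  have hmul (M N : Matrix n n ℝ) :
      (M * N).map Complex.ofReal = M.map Complex.ofReal * N.map Complex.ofReal :=
    Matrix.map_mul (f := Complex.ofRealHom)
  apply Complex.ofReal_injective
  rw [htrace, hmul, exp_map_ofReal, exp_map_ofReal, hAt, hA,
    trace_exp_mul_exp_conjTranspose hU]
  push_cast
  refine sum_congr rfl fun p _ => congrArg Complex.exp ?_
  simp only [Pi.neg_apply, Pi.smul_apply, Complex.neg_re, Complex.smul_re, smul_eq_mul]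
  push_cast
  ring

end Matrix

theorem tendsto_intervalIntegral_exp_neg_mul {c : ℝ} (hc : 0 < c) :
    Tendsto (fun t => ∫ s in (0 : ℝ)..t, Real.exp (-c * s)) atTop (nhds (1 / c)) := by
  have h := MeasureTheory.intervalIntegral_tendsto_integral_Ioi 0
    (integrableOn_exp_mul_Ioi (neg_lt_zero.mpr hc) 0) tendsto_id
  rwa [integral_exp_mul_Ioi (neg_lt_zero.mpr hc), mul_zero, Real.exp_zero, neg_div, div_neg,
    neg_neg] at h

theorem intervalIntegral_sum_exp_neg_mul {ι : Type*} [Fintype ι] [DecidableEq ι] {c : ι → ℝ}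
    {i₀ : ι} (hc : c i₀ = 0) (t : ℝ) :
    ∫ s in (0 : ℝ)..t, ∑ p, Real.exp (-c p * s)
      = t + ∑ p ∈ univ.erase i₀, ∫ s in (0 : ℝ)..t, Real.exp (-c p * s) := by
  have hint (p : ι) : IntervalIntegrable (fun s => Real.exp (-c p * s)) MeasureTheory.volume 0 t :=
    (by fun_prop : Continuous _).intervalIntegrable _ _
  rw [intervalIntegral.integral_finsetSum fun p _ => hint p, ← add_sum_erase _ _ (mem_univ i₀)]
  simp [hc]

theorem circulant_nodes_equally_certain_general {n : ℕ} [NeZero n]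
    (v : Fin n → ℝ) (L : Matrix (Fin n) (Fin n) ℝ)
    (hLcirc : L = Matrix.circulant v)
    (lam : Fin n → ℂ) (u : Fin n → Fin n → ℂ)
    (horth : ∀ p q, ∑ i, starRingEnd ℂ (u p i) * u q i = if p = q then 1 else 0)
    (heig : ∀ p, (L.map Complex.ofReal) *ᵥ u p = lam p • u p)
    (hlam0 : lam 0 = 0)
    (hre : ∀ p, p ≠ 0 → 0 < (lam p).re)
    (k : Fin n) :
    Tendsto
      (fun t : ℝ =>
        (∫ s in (0 : ℝ)..t,
            ((NormedSpace.exp (-(s • L))) * (NormedSpace.exp (-(s • Lᵀ)))) k k)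
          - t / n)
      atTop
      (nhds ((1 / n) * ∑ p ∈ Finset.univ.erase 0, 1 / (2 * (lam p).re))) := by
  have hentry (s : ℝ) : (exp (-(s • L)) * exp (-(s • Lᵀ))) k k
      = 1 / n * ∑ p, Real.exp (-(2 * (lam p).re) * s) := by
    have hcomm (w : Fin n → ℝ) : Commute (circulant w) (exp (-(s • L)) * exp (-(s • Lᵀ))) := by
      have hw (x : Fin n → ℝ) : Commute (circulant w) (circulant x) := circulant_mul_comm w x
      rw [hLcirc, transpose_circulant]
      exact ((hw v).smul_right s).neg_right.exp_right.mul_right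
        ((hw _).smul_right s).neg_right.exp_right
    have htrace := trace_eq_card_nsmul_of_forall_commute_circulant hcomm k
    rw [trace_exp_neg_smul_mul_exp_neg_smul_transpose L horth heig, Fintype.card_fin,
      nsmul_eq_mul] at htrace
    rw [htrace, one_div, inv_mul_cancel_left₀ (Nat.cast_ne_zero.mpr (NeZero.ne n))]
  have hlim : Tendsto (fun t => 1 / n * ∑ p ∈ univ.erase 0,
      ∫ s in (0 : ℝ)..t, Real.exp (-(2 * (lam p).re) * s)) atTop
      (nhds (1 / n * ∑ p ∈ univ.erase 0, 1 / (2 * (lam p).re))) :=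
    (tendsto_finsetSum _ fun p hp => tendsto_intervalIntegral_exp_neg_mul
      (by linarith [hre p (ne_of_mem_erase hp)])).const_mul _
  refine hlim.congr fun t => ?_
  simp_rw [hentry, intervalIntegral.integral_const_mul,
    intervalIntegral_sum_exp_neg_mul (c := fun p => 2 * (lam p).re) (i₀ := 0) (by simp [hlam0])]
  ring

/-- For a circulant Laplacian `L` (with `L·1 = 0`, zero a simple eigenvalue and
all other eigenvalues with positive real part), all nodes are equally certain:
for every `k`, the diagonal entry of the covariance integral minus `t/n`
converges to `(1/n)·∑_{p≠0} 1/(2 Re λ_p)`, independent of `k`. -/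
theorem circulant_nodes_equally_certain {n : ℕ} [NeZero n]
    (v : Fin n → ℝ) (L : Matrix (Fin n) (Fin n) ℝ)
    (hLcirc : L = Matrix.circulant v)
    (hL1 : L *ᵥ (fun _ => (1 : ℝ)) = 0)
    (lam : Fin n → ℂ) (u : Fin n → Fin n → ℂ)
    (horth : ∀ p q, ∑ i, starRingEnd ℂ (u p i) * u q i = if p = q then 1 else 0)
    (heig : ∀ p, (L.map Complex.ofReal) *ᵥ u p = lam p • u p)
    (hlam0 : lam 0 = 0)
    (hre : ∀ p, p ≠ 0 → 0 < (lam p).re)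
    (k : Fin n) :
    Tendsto
      (fun t : ℝ =>
        (∫ s in (0 : ℝ)..t,
            ((NormedSpace.exp (-(s • L))) * (NormedSpace.exp (-(s • Lᵀ)))) k k)
          - t / n)
      atTop
      (nhds ((1 / n) * ∑ p ∈ Finset.univ.erase 0, 1 / (2 * (lam p).re))) :=
  circulant_nodes_equally_certain_general v L hLcirc lam u horth heig hlam0 hre k
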